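/- arXiv:2206.05874 — 2 statements merged into one kernel-verified Lean document; each statement's English description precedes it below -/
import Mathlib

section
/- Let Ω ⊂ ℝⁿ be a bounded domain and ρ : Ω → ℝ a positive C² function with Δρ ≤ 0 on Ω. Then for every w ∈ C_c^∞(Ω, ℝ): ∫_Ω (|w|²/ρ²) |∇ρ|² dx ≤ 4 ∫_Ω |∇w|² dx. -/
open MeasureTheory

noncomputable section

/-- Euclidean space `ℝⁿ`. -/
abbrev E (n : ℕ) := EuclideanSpace ℝ (Fin n)

/-- Partial derivative `∂ᵢ f` of a scalar function. -/
def pd {n : ℕ} (f : E n → ℝ) (i : Fin n) (x : E n) : ℝ :=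
  fderiv ℝ f x (EuclideanSpace.single i 1)

/-- Euclidean Laplacian `Δ f = ∑ᵢ ∂ᵢ∂ᵢ f`. -/
def lap {n : ℕ} (f : E n → ℝ) (x : E n) : ℝ :=
  ∑ i, pd (pd f i) i x

/-- Squared gradient `|∇f|²`. -/
def gradSq {n : ℕ} (f : E n → ℝ) (x : E n) : ℝ :=
  ∑ i, (pd f i x) ^ 2

lemma pd_def {n : ℕ} (f : E n → ℝ) (i : Fin n) :
    pd f i = fun x => fderiv ℝ f x (EuclideanSpace.single i 1) := rfl

/-- Divergence-type lemma: the integral of a directional derivative of a compactly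
supported `C¹` function vanishes. -/
lemma integral_pd_eq_zero {n : ℕ} (g : E n → ℝ) (hg : ContDiff ℝ 1 g)
    (hgc : HasCompactSupport g) (v : E n) :
    ∫ x, fderiv ℝ g x v = 0 := by
  have hD : Continuous fun x => fderiv ℝ g x v :=
    (hg.continuous_fderiv one_ne_zero).clm_apply continuous_const
  have hDc : HasCompactSupport fun x => fderiv ℝ g x v := by
    apply HasCompactSupport.intro hgc
    intro x hx
    have : fderiv ℝ g x = 0 := by
      by_contra h
      exact hx (support_fderiv_subset ℝ (Function.mem_support.2 h))
    simp [this]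
  have h := integral_mul_fderiv_eq_neg_fderiv_mul_of_integrable (μ := volume)
    (f := fun _ : E n => (1:ℝ)) (g := g) (v := v)
    (by simpa using (integrable_zero _ _ _))
    (by simpa using hD.integrable_of_hasCompactSupport hDc)
    (by simpa using hg.continuous.integrable_of_hasCompactSupport hgc)
    (fun x _ => differentiableAt_const (1:ℝ)) (fun x _ => hg.differentiable one_ne_zero x)
  simpa using h

/-- first-order Hardy inequality: for a bounded domain `Ω ⊆ ℝⁿ`, a
positive `C²` function `ρ` with `Δρ ≤ 0` on `Ω`, and `w ∈ C_c^∞(Ω)`,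
`∫_Ω (w²/ρ²)|∇ρ|² ≤ 4 ∫_Ω |∇w|²`. -/
theorem stmt1 {n : ℕ} (Ω : Set (E n)) (hΩo : IsOpen Ω) (hΩne : Ω.Nonempty)
    (hΩb : Bornology.IsBounded Ω)
    (ρ : E n → ℝ) (hρ : ContDiffOn ℝ 2 ρ Ω) (hρ0 : ∀ x ∈ Ω, 0 < ρ x)
    (hsup : ∀ x ∈ Ω, lap ρ x ≤ 0)
    (w : E n → ℝ) (hw : ContDiff ℝ (⊤ : ℕ∞) w) (hwc : HasCompactSupport w)
    (hws : tsupport w ⊆ Ω) :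
    ∫ x in Ω, ((w x) ^ 2 / (ρ x) ^ 2) * gradSq ρ x ≤ 4 * ∫ x in Ω, gradSq w x := by
  classical
  have hKc : IsCompact (tsupport w) := hwc
  have hw0 : ∀ x, x ∉ tsupport w → w x = 0 := fun x hx => image_eq_zero_of_notMem_tsupport hx
  have hfw0 : ∀ x, x ∉ tsupport w → fderiv ℝ w x = 0 := by
    intro x hx
    by_contra h
    exact hx (support_fderiv_subset ℝ (Function.mem_support.2 h))
  have hρ1 : ContDiffOn ℝ 1 (fderiv ℝ ρ) Ω := hρ.fderiv_of_isOpen hΩo (by norm_num)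
  have hpdρ : ∀ i : Fin n, ContDiffOn ℝ 1 (pd ρ i) Ω := fun i => by
    rw [pd_def]; exact hρ1.clm_apply contDiffOn_const
  have hpdρc : ∀ i : Fin n, ContinuousOn (pd ρ i) Ω := fun i => (hpdρ i).continuousOn
  have hpd2c : ∀ i : Fin n, ContinuousOn (pd (pd ρ i) i) Ω := fun i => by
    rw [pd_def (pd ρ i)]
    exact ((hpdρ i).continuousOn_fderiv_of_isOpen hΩo le_rfl).clm_apply continuousOn_const
  have hρc : ContinuousOn ρ Ω := hρ.continuousOn
  have hρne : ∀ x ∈ Ω, ρ x ≠ 0 := fun x hx => (hρ0 x hx).ne'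
  have hw1 : ContDiff ℝ 1 w := hw.of_le (by simp)
  have hpdwc : ∀ i : Fin n, Continuous (pd w i) := fun i => by
    rw [pd_def]
    exact (hw1.continuous_fderiv one_ne_zero).clm_apply continuous_const
  -- the vector field coordinates
  set g : Fin n → E n → ℝ := fun i x => w x ^ 2 * pd ρ i x * (ρ x)⁻¹ with hgdef
  set D : Fin n → E n → ℝ := fun i x => fderiv ℝ (g i) x (EuclideanSpace.single i 1) with hDdef
  set X : E n → ℝ := fun x => w x ^ 2 / ρ x ^ 2 * gradSq ρ x with hXdef
  set Y : E n → ℝ := fun x => ∑ i, 2 * w x * pd w i x * (pd ρ i x * (ρ x)⁻¹) with hYdef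
  set Z : E n → ℝ := fun x => w x ^ 2 * lap ρ x * (ρ x)⁻¹ with hZdef
  -- gluing lemma for continuity
  have glue : ∀ f : E n → ℝ, ContinuousOn f Ω → (∀ x, x ∉ tsupport w → f x = 0) →
      Continuous f := by
    intro f hf h0
    rw [continuous_iff_continuousAt]
    intro x
    by_cases hx : x ∈ Ω
    · exact hf.continuousAt (hΩo.mem_nhds hx)
    · have hmem : (tsupport w)ᶜ ∈ nhds x :=
        (isClosed_tsupport w).isOpen_compl.mem_nhds (fun hxK => hx (hws hxK))
      have heq : f =ᶠ[nhds x] (fun _ => 0) := Filter.eventuallyEq_of_mem hmem h0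
      exact (continuousAt_const (y := (0:ℝ))).congr heq.symm
  have hg0 : ∀ i x, x ∉ tsupport w → g i x = 0 := by
    intro i x hx; simp [hgdef, hw0 x hx]
  have hgC1 : ∀ i, ContDiff ℝ 1 (g i) := by
    intro i
    rw [contDiff_iff_contDiffAt]
    intro x
    by_cases hx : x ∈ Ω
    · have : ContDiffOn ℝ 1 (g i) Ω :=
        ((hw1.contDiffOn.pow 2).mul (hpdρ i)).mul ((hρ.of_le (by norm_num)).inv hρne)
      exact this.contDiffAt (hΩo.mem_nhds hx)
    · have hmem : (tsupport w)ᶜ ∈ nhds x :=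
        (isClosed_tsupport w).isOpen_compl.mem_nhds (fun hxK => hx (hws hxK))
      have heq : g i =ᶠ[nhds x] (fun _ => (0:ℝ)) :=
        Filter.eventuallyEq_of_mem hmem (hg0 i)
      exact (contDiffAt_const (c := (0:ℝ))).congr_of_eventuallyEq heq
  have hgcs : ∀ i, HasCompactSupport (g i) := fun i =>
    HasCompactSupport.intro hKc (hg0 i)
  have hDkey : ∀ i, ∫ x, D i x = 0 := fun i =>
    integral_pd_eq_zero (g i) (hgC1 i) (hgcs i) _
  have hD0 : ∀ i x, x ∉ tsupport w → D i x = 0 := by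
    intro i x hx
    have : fderiv ℝ (g i) x = 0 := by
      by_contra h
      have hmem : x ∈ tsupport (g i) := support_fderiv_subset ℝ (Function.mem_support.2 h)
      have : tsupport (g i) ⊆ tsupport w :=
        closure_minimal (fun y hy => by
          by_contra hy'
          exact hy (hg0 i y hy')) (isClosed_tsupport w)
      exact hx (this hmem)
    simp [hDdef, this]
  have hDc : ∀ i, Continuous (D i) := fun i =>
    ((hgC1 i).continuous_fderiv one_ne_zero).clm_apply continuous_const
  have hDint : ∀ i, Integrable (D i) := fun i =>
    (hDc i).integrable_of_hasCompactSupport (HasCompactSupport.intro hKc (hD0 i))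
  have hSint0 : ∫ x, (∑ i, D i x) = 0 := by
    rw [integral_finset_sum _ (fun i _ => hDint i)]
    simp [hDkey]
  have hSΩ : ∫ x in Ω, (∑ i, D i x) = 0 := by
    rw [setIntegral_eq_integral_of_forall_compl_eq_zero
      (fun x hx => by
        have hxK : x ∉ tsupport w := fun h => hx (hws h)
        simp [hD0 _ _ hxK])]
    exact hSint0
  -- pointwise computation of D i on Ω
  have hDcalc : ∀ x ∈ Ω, ∀ i, D i x =
      (w x ^ 2 * pd ρ i x) * (-(ρ x ^ 2)⁻¹ * pd ρ i x)
      + (ρ x)⁻¹ * (w x ^ 2 * pd (pd ρ i) i x + pd ρ i x * (2 * w x * pd w i x)) := by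
    intro x hx i
    have hρx := hρne x hx
    have hwF : HasFDerivAt w (fderiv ℝ w x) x := (hw.differentiable (by simp) x).hasFDerivAt
    have hρF : HasFDerivAt ρ (fderiv ℝ ρ x) x :=
      ((hρ.contDiffAt (hΩo.mem_nhds hx)).differentiableAt (by norm_num)).hasFDerivAt
    have hpF : HasFDerivAt (pd ρ i) (fderiv ℝ (pd ρ i) x) x :=
      (((hpdρ i).contDiffAt (hΩo.mem_nhds hx)).differentiableAt one_ne_zero).hasFDerivAt
    have hw2 : HasFDerivAt (fun y => w y ^ 2) ((2 * w x) • fderiv ℝ w x) x := by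
      have h := hwF.mul hwF
      have e1 : w x • fderiv ℝ w x + w x • fderiv ℝ w x = (2 * w x) • fderiv ℝ w x := by
        rw [← add_smul]; ring_nf
      rw [e1] at h
      have e2 : (fun y => w y ^ 2) = fun y => w y * w y := by funext y; ring
      rw [e2]; exact h
    have hinv : HasFDerivAt (fun y => (ρ y)⁻¹) ((-(ρ x ^ 2)⁻¹) • fderiv ℝ ρ x) x :=
      (hasDerivAt_inv hρx).comp_hasFDerivAt x hρF
    have h1 := hw2.mul hpF
    have h2 := h1.mul hinv
    have hfd : fderiv ℝ (g i) x = _ := h2.fderiv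
    have : D i x = (fderiv ℝ (g i) x) (EuclideanSpace.single i 1) := rfl
    rw [this, hfd]
    simp only [ContinuousLinearMap.add_apply, ContinuousLinearMap.coe_smul',
      Pi.smul_apply, smul_eq_mul, pd, Pi.mul_apply]
  -- sum identity on Ω
  have hDsum : ∀ x ∈ Ω, (∑ i, D i x) = Y x + Z x - X x := by
    intro x hx
    have hρx := hρne x hx
    simp only [hYdef, hZdef, hXdef, gradSq, lap, Finset.mul_sum, Finset.sum_mul,
      Finset.sum_div]
    rw [← Finset.sum_add_distrib, ← Finset.sum_sub_distrib]
    refine Finset.sum_congr rfl fun i _ => ?_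
    rw [hDcalc x hx i]
    field_simp
    ring
  -- continuity and integrability of the pieces
  have hgradρc : ContinuousOn (fun x => gradSq ρ x) Ω := by
    simp only [gradSq]
    exact continuousOn_finset_sum _ (fun i _ => (hpdρc i).pow 2)
  have hXc : Continuous X := by
    refine glue _ ?_ (fun x hx => by simp [hXdef, hw0 x hx])
    exact (((hw.continuous.pow 2).continuousOn.div (hρc.pow 2)
      (fun x hx => pow_ne_zero 2 (hρne x hx))).mul hgradρc)
  have hYc : Continuous Y := by
    refine glue _ ?_ (fun x hx => by simp [hYdef, hw0 x hx])
    refine continuousOn_finset_sum _ (fun i _ => ?_)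
    exact ((((continuousOn_const).mul hw.continuous.continuousOn).mul
      (hpdwc i).continuousOn).mul ((hpdρc i).mul (hρc.inv₀ hρne)))
  have hZc : Continuous Z := by
    refine glue _ ?_ (fun x hx => by simp [hZdef, hw0 x hx])
    have hlapc : ContinuousOn (fun x => lap ρ x) Ω := by
      simp only [lap]
      exact continuousOn_finset_sum _ (fun i _ => hpd2c i)
    exact (((hw.continuous.pow 2).continuousOn.mul hlapc).mul (hρc.inv₀ hρne))
  have hGwc : Continuous (fun x => gradSq w x) := by
    simp only [gradSq]
    exact continuous_finset_sum _ (fun i _ => (hpdwc i).pow 2)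
  have hX0 : ∀ x, x ∉ tsupport w → X x = 0 := fun x hx => by simp [hXdef, hw0 x hx]
  have hY0 : ∀ x, x ∉ tsupport w → Y x = 0 := fun x hx => by simp [hYdef, hw0 x hx]
  have hZ0 : ∀ x, x ∉ tsupport w → Z x = 0 := fun x hx => by simp [hZdef, hw0 x hx]
  have hGw0 : ∀ x, x ∉ tsupport w → gradSq w x = 0 := fun x hx => by
    simp [gradSq, pd, hfw0 x hx]
  have hXint : IntegrableOn X Ω :=
    (hXc.integrable_of_hasCompactSupport (HasCompactSupport.intro hKc hX0)).integrableOn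
  have hYint : IntegrableOn Y Ω :=
    (hYc.integrable_of_hasCompactSupport (HasCompactSupport.intro hKc hY0)).integrableOn
  have hZint : IntegrableOn Z Ω :=
    (hZc.integrable_of_hasCompactSupport (HasCompactSupport.intro hKc hZ0)).integrableOn
  have hGwint : IntegrableOn (fun x => gradSq w x) Ω :=
    (hGwc.integrable_of_hasCompactSupport (HasCompactSupport.intro hKc hGw0)).integrableOn
  -- the integral identity
  have hIeq : ∫ x in Ω, X x = (∫ x in Ω, Y x) + ∫ x in Ω, Z x := by
    have h1 : ∫ x in Ω, (Y x + Z x - X x) = 0 := by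
      calc ∫ x in Ω, (Y x + Z x - X x)
          = ∫ x in Ω, (∑ i, D i x) :=
            (setIntegral_congr_fun hΩo.measurableSet (fun x hx => hDsum x hx)).symm
        _ = 0 := hSΩ
    have h2 : ∫ x in Ω, (Y x + Z x - X x) =
        ((∫ x in Ω, Y x) + ∫ x in Ω, Z x) - ∫ x in Ω, X x := by
      have hYZ : Integrable (fun x => Y x + Z x) (volume.restrict Ω) := hYint.add hZint
      have h3 := integral_sub hYZ hXint
      rw [integral_add hYint hZint] at h3
      exact h3
    rw [h2] at h1
    linarith
  have hZneg : ∫ x in Ω, Z x ≤ 0 := by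
    apply setIntegral_nonpos hΩo.measurableSet
    intro x hx
    have h1 : w x ^ 2 * lap ρ x ≤ 0 :=
      mul_nonpos_of_nonneg_of_nonpos (sq_nonneg _) (hsup x hx)
    have h2 : (0:ℝ) ≤ (ρ x)⁻¹ := le_of_lt (inv_pos.2 (hρ0 x hx))
    show w x ^ 2 * lap ρ x * (ρ x)⁻¹ ≤ 0
    nlinarith
  -- pointwise Young inequality
  have hpoint : ∀ x ∈ Ω, Y x ≤ (1/2) * X x + 2 * gradSq w x := by
    intro x hx
    have hexp : (1/2) * X x + 2 * gradSq w x =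
        ∑ i, ((1/2) * (w x ^ 2 / ρ x ^ 2 * pd ρ i x ^ 2) + 2 * pd w i x ^ 2) := by
      simp only [hXdef, gradSq, Finset.mul_sum, Finset.sum_add_distrib]
    rw [hexp, hYdef]
    refine Finset.sum_le_sum fun i _ => ?_
    have ha : w x ^ 2 / ρ x ^ 2 * pd ρ i x ^ 2 = (w x * pd ρ i x * (ρ x)⁻¹) ^ 2 := by
      field_simp
    rw [ha]
    nlinarith [sq_nonneg (w x * pd ρ i x * (ρ x)⁻¹ - 2 * pd w i x)]
  have hYle : ∫ x in Ω, Y x ≤ ((1/2) * ∫ x in Ω, X x) + 2 * ∫ x in Ω, gradSq w x := by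
    have h := setIntegral_mono_on hYint
      ((hXint.const_mul (1/2 : ℝ)).add (hGwint.const_mul 2)) hΩo.measurableSet hpoint
    have hXhalf : Integrable (fun x => (1/2 : ℝ) * X x) (volume.restrict Ω) :=
      hXint.const_mul _
    have hGw2 : Integrable (fun x => (2:ℝ) * gradSq w x) (volume.restrict Ω) :=
      hGwint.const_mul _
    have h4 := integral_add hXhalf hGw2
    rw [integral_const_mul, integral_const_mul] at h4
    calc ∫ x in Ω, Y x ≤ ∫ x in Ω, ((1/2) * X x + 2 * gradSq w x) := h
      _ = ((1/2) * ∫ x in Ω, X x) + 2 * ∫ x in Ω, gradSq w x := h4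
  have : ∫ x in Ω, X x ≤ 4 * ∫ x in Ω, gradSq w x := by linarith
  exact this
end
end

section
/- Let Ω ⊂ ℝⁿ be a bounded domain and ρ : Ω → ℝ a positive C² function with Δρ ≤ 0 and |∇ρ| ≥ c > 0 on Ω. Then there exists a constant C = C(Ω, c) > 0 such that for every w ∈ C_c^∞(Ω, ℝ): ∫_Ω |w|²/ρ⁴ dx ≤ C ∫_Ω |Δw|² dx. -/
open MeasureTheory
open Manifold

noncomputable section

namespace HardyAux

variable {n : ℕ}

lemma pd_congr {f g : E n → ℝ} {x : E n} (h : f =ᶠ[nhds x] g) (i : Fin n) :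
    pd f i x = pd g i x := by
  unfold pd; rw [h.fderiv_eq]

lemma pd_zero_off {K : Set (E n)} (hK : IsClosed K) {f : E n → ℝ}
    (h0 : ∀ y ∉ K, f y = 0) {x : E n} (hx : x ∉ K) (i : Fin n) : pd f i x = 0 := by
  have hev : f =ᶠ[nhds x] (fun _ => (0 : ℝ)) :=
    Filter.eventually_of_mem (hK.isOpen_compl.mem_nhds hx) h0
  rw [pd_congr hev]
  simp [pd]

lemma contDiff_glue {Ω K : Set (E n)} (hΩ : IsOpen Ω) (hK : IsClosed K) {m : ℕ∞}
    {f : E n → ℝ} (h1 : ContDiffOn ℝ m f Ω) (h0 : ∀ x ∉ K, f x = 0) (hKΩ : K ⊆ Ω) :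
    ContDiff ℝ m f := by
  rw [← contDiffOn_univ]
  intro x _
  by_cases hx : x ∈ Ω
  · exact (h1.contDiffAt (hΩ.mem_nhds hx)).contDiffWithinAt
  · have hxK : x ∉ K := fun h => hx (hKΩ h)
    have hev : f =ᶠ[nhds x] (fun _ => (0 : ℝ)) :=
      Filter.eventually_of_mem (hK.isOpen_compl.mem_nhds hxK) h0
    exact ((contDiffAt_const (c := (0 : ℝ))).congr_of_eventuallyEq hev).contDiffWithinAt

lemma continuous_glue {Ω K : Set (E n)} (hΩ : IsOpen Ω) (hK : IsClosed K)
    {f : E n → ℝ} (h1 : ContinuousOn f Ω) (h0 : ∀ x ∉ K, f x = 0) (hKΩ : K ⊆ Ω) :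
    Continuous f := by
  rw [continuous_iff_continuousAt]
  intro x
  by_cases hx : x ∈ Ω
  · exact h1.continuousAt (hΩ.mem_nhds hx)
  · have hxK : x ∉ K := fun h => hx (hKΩ h)
    have hev : f =ᶠ[nhds x] (fun _ => (0 : ℝ)) :=
      Filter.eventually_of_mem (hK.isOpen_compl.mem_nhds hxK) h0
    exact ContinuousAt.congr (continuousAt_const (y := (0 : ℝ))) hev.symm

lemma integrable_glue {Ω K : Set (E n)} (hΩ : IsOpen Ω) (hK : IsCompact K)
    {f : E n → ℝ} (h1 : ContinuousOn f Ω) (h0 : ∀ x ∉ K, f x = 0) (hKΩ : K ⊆ Ω) :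
    Integrable f := by
  have hc : Continuous f := continuous_glue hΩ hK.isClosed h1 h0 hKΩ
  exact hc.integrable_of_hasCompactSupport (HasCompactSupport.intro hK h0)

lemma integral_pd_zero {Ω K : Set (E n)} (hΩ : IsOpen Ω) (hK : IsCompact K)
    {f : E n → ℝ} (h1 : ContDiffOn ℝ 1 f Ω) (h0 : ∀ x ∉ K, f x = 0) (hKΩ : K ⊆ Ω)
    (i : Fin n) : ∫ x, pd f i x = 0 := by
  have hf : ContDiff ℝ 1 f := contDiff_glue hΩ hK.isClosed h1 h0 hKΩ
  have hfd : Differentiable ℝ f := hf.differentiable one_ne_zero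
  have hcont : Continuous fun x => fderiv ℝ f x (EuclideanSpace.single i 1) :=
    (hf.continuous_fderiv one_ne_zero).clm_apply continuous_const
  have hder0 : ∀ x ∉ K, fderiv ℝ f x (EuclideanSpace.single i 1) = 0 := by
    intro x hx
    exact pd_zero_off hK.isClosed h0 hx i
  have hint : Integrable fun x => fderiv ℝ f x (EuclideanSpace.single i 1) :=
    hcont.integrable_of_hasCompactSupport (HasCompactSupport.intro hK hder0)
  have hintf : Integrable f :=
    (hf.continuous).integrable_of_hasCompactSupport (HasCompactSupport.intro hK h0)
  have := integral_mul_fderiv_eq_neg_fderiv_mul_of_integrable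
    (f := fun _ : E n => (1 : ℝ)) (g := f) (v := EuclideanSpace.single i 1)
    (μ := volume) ?_ ?_ ?_ (fun x _ => differentiableAt_const _) (fun x _ => hfd x)
  · simpa [pd] using this
  · simpa using (integrable_zero (E n) ℝ volume)
  · simpa using hint
  · simpa using hintf

lemma pd_of_hasFDerivAt {f : E n → ℝ} {L : E n →L[ℝ] ℝ} {x : E n}
    (h : HasFDerivAt f L x) (i : Fin n) : pd f i x = L (EuclideanSpace.single i 1) := by
  rw [pd, h.fderiv]

lemma contDiff_pd {f : E n → ℝ} (hf : ContDiff ℝ (⊤ : ℕ∞) f) (i : Fin n) :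
    ContDiff ℝ (⊤ : ℕ∞) (pd f i) := by
  have h1 : ContDiff ℝ (⊤ : ℕ∞) fun y => fderiv ℝ f y := hf.fderiv_right (by simp)
  exact h1.clm_apply contDiff_const

lemma pd_comm {f : E n → ℝ} (hf : ContDiff ℝ (⊤ : ℕ∞) f) (i j : Fin n) (x : E n) :
    pd (pd f i) j x = pd (pd f j) i x := by
  have hd : ∀ y, HasFDerivAt f (fderiv ℝ f y) y := fun y =>
    (hf.differentiable (by simp) y).hasFDerivAt
  have hd2 : DifferentiableAt ℝ (fderiv ℝ f) x :=
    (hf.fderiv_right (m := (⊤ : ℕ∞)) ((by simp))).differentiable (by simp) x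
  have hsymm := second_derivative_symmetric (f := f) (f' := fderiv ℝ f)
    (f'' := fderiv ℝ (fderiv ℝ f) x) hd hd2.hasFDerivAt
  have key : ∀ k l : Fin n, pd (pd f k) l x =
      fderiv ℝ (fderiv ℝ f) x (EuclideanSpace.single l 1) (EuclideanSpace.single k 1) := by
    intro k l
    have : pd f k = fun y => (fderiv ℝ f y) (EuclideanSpace.single k 1) := rfl
    rw [pd, this, fderiv_clm_apply hd2 (differentiableAt_const _)]
    simp
  rw [key i j, key j i, hsymm]

lemma cutoff {Ω : Set (E n)} (hΩo : IsOpen Ω) {K : Set (E n)} (hK : IsCompact K)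
    (hKΩ : K ⊆ Ω) :
    ∃ (φ : E n → ℝ) (U : Set (E n)) (K'' : Set (E n)),
      ContDiff ℝ (⊤ : ℕ∞) φ ∧ IsOpen U ∧ K ⊆ U ∧ (∀ x ∈ U, φ x = 1) ∧
      IsCompact K'' ∧ K'' ⊆ Ω ∧ (∀ x ∉ K'', φ x = 0) ∧ (∀ x, 0 ≤ φ x) := by
  obtain ⟨K', hK'c, hKK', hK'Ω⟩ := exists_compact_between hK hΩo hKΩ
  obtain ⟨K'', hK''c, hK'K'', hK''Ω⟩ := exists_compact_between hK'c hΩo hK'Ω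
  obtain ⟨f, hf0, hf1, hf01⟩ := exists_contMDiffMap_zero_one_of_isClosed (𝓘(ℝ, E n))
    (isOpen_interior (s := K'')).isClosed_compl hK'c.isClosed
    (Set.disjoint_left.mpr (fun x hx h => hx (hK'K'' h)))
  refine ⟨f, interior K', K'', ?_, isOpen_interior, hKK', ?_, hK''c, hK''Ω, ?_, ?_⟩
  · exact contMDiff_iff_contDiff.mp f.contMDiff
  · intro x hx
    exact hf1 (interior_subset hx)
  · intro x hx
    exact hf0 (fun h => hx (interior_subset h))
  · intro x
    exact (hf01 x).1



set_option maxHeartbeats 2000000 in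
lemma core {n : ℕ} {Ω : Set (E n)} (hΩo : IsOpen Ω) {c : ℝ} (hc : 0 < c)
    (ρ : E n → ℝ) (hρ : ContDiffOn ℝ 2 ρ Ω) (hρpos : ∀ x ∈ Ω, 0 < ρ x)
    (hρlap : ∀ x ∈ Ω, lap ρ x ≤ 0) (hρgrad : ∀ x ∈ Ω, c ≤ Real.sqrt (gradSq ρ x))
    (w : E n → ℝ) (hw : ContDiff ℝ (⊤ : ℕ∞) w) (hwc : HasCompactSupport w) (hwΩ : tsupport w ⊆ Ω) :
    ∫ x in Ω, (w x) ^ 2 / (ρ x) ^ 4 ≤ (25 / (9 * c ^ 4)) * ∫ x in Ω, (lap w x) ^ 2 := by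
  have hK : IsCompact (tsupport w) := hwc
  set K := tsupport w with hKdef
  have hKΩ : K ⊆ Ω := hwΩ
  obtain ⟨φ, U, K'', hφs, hUo, hKU, hφ1, hK''c, hK''Ω, hφ0, hφnn⟩ := cutoff hΩo hK hKΩ
  set q : E n → ℝ := fun x => φ x * (ρ x)⁻¹ with hqdef
  have hw0 : ∀ x ∉ K, w x = 0 := fun x hx => image_eq_zero_of_notMem_tsupport hx
  -- q is C² globally
  have hρne : ∀ x ∈ Ω, ρ x ≠ 0 := fun x hx => (hρpos x hx).ne'
  have hqΩ : ContDiffOn ℝ 2 q Ω :=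
    ((hφs.of_le (by
      rw [show ((2:WithTop ℕ∞)) = ((2:ℕ∞) : WithTop ℕ∞) from rfl]
      exact WithTop.coe_le_coe.mpr le_top)).contDiffOn).mul (hρ.inv hρne)
  have hq0 : ∀ x ∉ K'', q x = 0 := by
    intro x hx
    simp [hqdef, hφ0 x hx]
  have hq : ContDiff ℝ (2 : ℕ∞) q := contDiff_glue hΩo hK''c.isClosed hqΩ hq0 hK''Ω
  have hqc : Continuous q := hq.continuous
  have hqd : Differentiable ℝ q := hq.differentiable (by simp)
  have hqU : ∀ x ∈ U, q x = (ρ x)⁻¹ := by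
    intro x hx
    simp [hqdef, hφ1 x hx]
  have hqnn : ∀ x, 0 ≤ q x := by
    intro x
    by_cases hx : x ∈ Ω
    · exact mul_nonneg (hφnn x) (inv_nonneg.mpr (hρpos x hx).le)
    · have : q x = 0 := hq0 x (fun h => hx (hK''Ω h))
      simp [this]
  -- w-side registry
  have hwd : Differentiable ℝ w := hw.differentiable (by simp)
  have hu : ∀ i, ContDiff ℝ (⊤ : ℕ∞) (pd w i) := fun i => contDiff_pd hw i
  have hud : ∀ i, Differentiable ℝ (pd w i) := fun i => (hu i).differentiable (by simp)
  have huu : ∀ i j, ContDiff ℝ (⊤ : ℕ∞) (pd (pd w i) j) := fun i j => contDiff_pd (hu i) j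
  have huud : ∀ i j, Differentiable ℝ (pd (pd w i) j) := fun i j => (huu i j).differentiable (by simp)
  have hu0 : ∀ i, ∀ x ∉ K, pd w i x = 0 := fun i x hx => pd_zero_off hK.isClosed hw0 hx i
  have huu0 : ∀ i j, ∀ x ∉ K, pd (pd w i) j x = 0 :=
    fun i j x hx => pd_zero_off hK.isClosed (hu0 i) hx j
  -- ρ-side registry
  have hρd : ∀ x ∈ Ω, DifferentiableAt ℝ ρ x := fun x hx =>
    (hρ.differentiableOn (by simp)).differentiableAt (hΩo.mem_nhds hx)
  have hP1 : ∀ j, ContDiffOn ℝ 1 (pd ρ j) Ω := by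
    intro j
    have h1 : ContDiffOn ℝ 1 (fderiv ℝ ρ) Ω := hρ.fderiv_of_isOpen hΩo (by norm_num)
    exact h1.clm_apply contDiffOn_const
  have hPd : ∀ j, ∀ x ∈ Ω, DifferentiableAt ℝ (pd ρ j) x := fun j x hx =>
    ((hP1 j).differentiableOn one_ne_zero).differentiableAt (hΩo.mem_nhds hx)
  have hPc : ∀ j, ContinuousOn (pd ρ j) Ω := fun j => (hP1 j).continuousOn
  have hPPc : ∀ j k, ContinuousOn (pd (pd ρ j) k) Ω := by
    intro j k
    have h1 : ContinuousOn (fderiv ℝ (pd ρ j)) Ω :=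
      (hP1 j).continuousOn_fderiv_of_isOpen hΩo le_rfl
    exact h1.clm_apply continuousOn_const
  -- derivative of q on U ∩ Ω
  have hpdq : ∀ x, x ∈ U → x ∈ Ω → ∀ i, pd q i x = -(pd ρ i x) * q x ^ 2 := by
    intro x hxU hxΩ i
    have hne : ρ x ≠ 0 := hρne x hxΩ
    have hinv : HasFDerivAt (fun y => (ρ y)⁻¹) ((-(ρ x ^ 2)⁻¹) • fderiv ℝ ρ x) x :=
      (hasDerivAt_inv hne).comp_hasFDerivAt x (hρd x hxΩ).hasFDerivAt
    have hev : q =ᶠ[nhds x] fun y => (ρ y)⁻¹ :=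
      Filter.eventually_of_mem (hUo.mem_nhds hxU) hqU
    rw [pd_congr hev i, pd_of_hasFDerivAt hinv i]
    have hqx : q x = (ρ x)⁻¹ := hqU x hxU
    simp only [ContinuousLinearMap.coe_smul', Pi.smul_apply, smul_eq_mul]
    rw [hqx]
    unfold pd
    field_simp

  -- generic integrability builder
  have INT : ∀ f : E n → ℝ, ContinuousOn f Ω → (∀ x ∉ K, f x = 0) → Integrable f :=
    fun f h1 h0 => integrable_glue hΩo hK h1 h0 hKΩ
  have hq1Ω : ContDiffOn ℝ 1 q Ω := hqΩ.of_le (by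
      rw [show ((1:WithTop ℕ∞)) = ((1:ℕ∞) : WithTop ℕ∞) from rfl,
        show ((2:WithTop ℕ∞)) = ((2:ℕ∞) : WithTop ℕ∞) from rfl]
      exact WithTop.coe_le_coe.mpr (by norm_num))
  have hu1 : ∀ i, ContDiffOn ℝ 1 (pd w i) Ω := fun i => ((hu i).of_le (by simp)).contDiffOn
  have hw1 : ContDiffOn ℝ 1 w Ω := (hw.of_le (by simp)).contDiffOn
  have huu1 : ∀ i j, ContDiffOn ℝ 1 (pd (pd w i) j) Ω :=
    fun i j => ((huu i j).of_le (by simp)).contDiffOn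
  -- integrability of the atomic integrands
  have intA1 : ∀ i j, Integrable (fun x => 2 * pd w i x * pd (pd w i) j x * pd ρ j x * q x) := by
    intro i j
    refine INT _ ?_ ?_
    · exact (((continuous_const.mul (hu i).continuous).mul
        (huu i j).continuous).continuousOn.mul (hPc j)).mul hqc.continuousOn
    · intro x hx; simp [hu0 i x hx]
  have intA2 : ∀ i j, Integrable (fun x => pd w i x ^ 2 * pd (pd ρ j) j x * q x) := by
    intro i j
    refine INT _ ?_ ?_
    · exact ((((hu i).continuous.pow 2).continuousOn.mul (hPPc j j)).mul hqc.continuousOn)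
    · intro x hx; simp [hu0 i x hx]
  have intA3 : ∀ i j, Integrable (fun x => pd w i x ^ 2 * pd ρ j x ^ 2 * q x ^ 2) := by
    intro i j
    refine INT _ ?_ ?_
    · exact ((((hu i).continuous.pow 2).continuousOn.mul ((hPc j).pow 2)).mul
        (hqc.pow 2).continuousOn)
    · intro x hx; simp [hu0 i x hx]
  have intB1 : ∀ i, Integrable (fun x => pd w i x ^ 2 * q x ^ 2) := by
    intro i
    refine INT _ ?_ ?_
    · exact (((hu i).continuous.pow 2).mul (hqc.pow 2)).continuousOn
    · intro x hx; simp [hu0 i x hx]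
  have intB2 : ∀ i, Integrable (fun x => w x * pd (pd w i) i x * q x ^ 2) := by
    intro i
    refine INT _ ?_ ?_
    · exact ((hw.continuous.mul (huu i i).continuous).mul (hqc.pow 2)).continuousOn
    · intro x hx; simp [hw0 x hx]
  have intB3 : ∀ i, Integrable (fun x => 2 * w x * pd w i x * pd ρ i x * q x ^ 3) := by
    intro i
    refine INT _ ?_ ?_
    · exact ((((continuous_const.mul hw.continuous).mul
        (hu i).continuous).continuousOn.mul (hPc i)).mul (hqc.pow 3).continuousOn)
    · intro x hx; simp [hw0 x hx]
  have intC2 : ∀ i, Integrable (fun x => w x ^ 2 * pd (pd ρ i) i x * q x ^ 3) := by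
    intro i
    refine INT _ ?_ ?_
    · exact (((hw.continuous.pow 2).continuousOn.mul (hPPc i i)).mul (hqc.pow 3).continuousOn)
    · intro x hx; simp [hw0 x hx]
  have intC3 : ∀ i, Integrable (fun x => w x ^ 2 * pd ρ i x ^ 2 * q x ^ 4) := by
    intro i
    refine INT _ ?_ ?_
    · exact (((hw.continuous.pow 2).continuousOn.mul ((hPc i).pow 2)).mul
        (hqc.pow 4).continuousOn)
    · intro x hx; simp [hw0 x hx]
  have intD1 : ∀ i j, Integrable (fun x => pd (pd w i) j x ^ 2) := by
    intro i j
    refine INT _ ((huu i j).continuous.pow 2).continuousOn ?_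
    intro x hx; simp [huu0 i j x hx]
  have intD3 : ∀ i j, Integrable (fun x => pd (pd w i) i x * pd (pd w j) j x) := by
    intro i j
    refine INT _ ((huu i i).continuous.mul (huu j j).continuous).continuousOn ?_
    intro x hx; simp [huu0 i i x hx]
  have intD4 : ∀ i j, Integrable (fun x => pd w j x * pd (pd (pd w i) i) j x) := by
    intro i j
    refine INT _ ((hu j).continuous.mul (contDiff_pd (huu i i) j).continuous).continuousOn ?_
    intro x hx; simp [hu0 j x hx]
  have intA : Integrable (fun x => w x ^ 2 * q x ^ 4) := by
    refine INT _ ((hw.continuous.pow 2).mul (hqc.pow 4)).continuousOn ?_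
    intro x hx; simp [hw0 x hx]
  have hlapweq : lap w = fun x => ∑ i, pd (pd w i) i x := rfl
  have hlapwc : Continuous (lap w) := by
    rw [hlapweq]; exact continuous_finset_sum _ (fun i _ => (huu i i).continuous)
  have hlapw0 : ∀ x ∉ K, lap w x = 0 := by
    intro x hx
    rw [hlapweq]
    exact Finset.sum_eq_zero fun i _ => huu0 i i x hx
  have intD : Integrable (fun x => (lap w x) ^ 2) := by
    refine INT _ (hlapwc.pow 2).continuousOn ?_
    intro x hx; simp [hlapw0 x hx]
  -- identity family A
  have hRA : ∀ i j : Fin n,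
      ∫ x, pd w i x ^ 2 * pd ρ j x ^ 2 * q x ^ 2 =
        (∫ x, 2 * pd w i x * pd (pd w i) j x * pd ρ j x * q x) +
        ∫ x, pd w i x ^ 2 * pd (pd ρ j) j x * q x := by
    intro i j
    have hg1 : ContDiffOn ℝ 1 (fun y => pd w i y * pd w i y * pd ρ j y * q y) Ω :=
      (((hu1 i).mul (hu1 i)).mul (hP1 j)).mul hq1Ω
    have hg0 : ∀ x ∉ K, (fun y => pd w i y * pd w i y * pd ρ j y * q y) x = 0 := by
      intro x hx; simp [hu0 i x hx]
    have h0 := integral_pd_zero hΩo hK hg1 hg0 hKΩ j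
    have hexp : ∀ x, pd (fun y => pd w i y * pd w i y * pd ρ j y * q y) j x =
        2 * pd w i x * pd (pd w i) j x * pd ρ j x * q x
        + pd w i x ^ 2 * pd (pd ρ j) j x * q x
        - pd w i x ^ 2 * pd ρ j x ^ 2 * q x ^ 2 := by
      intro x
      by_cases hx : x ∈ K
      · have hxU : x ∈ U := hKU hx
        have hxΩ : x ∈ Ω := hKΩ hx
        have hW : HasFDerivAt (pd w i) (fderiv ℝ (pd w i) x) x := (hud i x).hasFDerivAt
        have hP : HasFDerivAt (pd ρ j) (fderiv ℝ (pd ρ j) x) x := (hPd j x hxΩ).hasFDerivAt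
        have hQ : HasFDerivAt q (fderiv ℝ q x) x := (hqd x).hasFDerivAt
        have hq' := hpdq x hxU hxΩ j
        rw [pd_of_hasFDerivAt (f := fun y => pd w i y * pd w i y * pd ρ j y * q y) (((hW.mul hW).mul hP).mul hQ) j]
        simp only [ContinuousLinearMap.add_apply, ContinuousLinearMap.coe_smul',
          Pi.smul_apply, smul_eq_mul, Pi.mul_apply]
        simp only [pd] at hq' ⊢
        rw [hq']
        ring
      · rw [pd_zero_off hK.isClosed hg0 hx j]
        simp [hu0 i x hx]
    simp only [hexp] at h0
    have intA12 : Integrable (fun x => 2 * pd w i x * pd (pd w i) j x * pd ρ j x * q x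
        + pd w i x ^ 2 * pd (pd ρ j) j x * q x) := (intA1 i j).add (intA2 i j)
    rw [integral_sub intA12 (intA3 i j), integral_add (intA1 i j) (intA2 i j)] at h0
    linarith

  -- identity family B
  have hRB : ∀ i : Fin n,
      ∫ x, 2 * w x * pd w i x * pd ρ i x * q x ^ 3 =
        (∫ x, pd w i x ^ 2 * q x ^ 2) + ∫ x, w x * pd (pd w i) i x * q x ^ 2 := by
    intro i
    have hg1 : ContDiffOn ℝ 1 (fun y => w y * pd w i y * (q y * q y)) Ω :=
      (hw1.mul (hu1 i)).mul (hq1Ω.mul hq1Ω)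
    have hg0 : ∀ x ∉ K, (fun y => w y * pd w i y * (q y * q y)) x = 0 := by
      intro x hx; simp [hw0 x hx]
    have h0 := integral_pd_zero hΩo hK hg1 hg0 hKΩ i
    have hexp : ∀ x, pd (fun y => w y * pd w i y * (q y * q y)) i x =
        pd w i x ^ 2 * q x ^ 2
        + w x * pd (pd w i) i x * q x ^ 2
        - 2 * w x * pd w i x * pd ρ i x * q x ^ 3 := by
      intro x
      by_cases hx : x ∈ K
      · have hxU : x ∈ U := hKU hx
        have hxΩ : x ∈ Ω := hKΩ hx
        have hWf : HasFDerivAt w (fderiv ℝ w x) x := (hwd x).hasFDerivAt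
        have hW : HasFDerivAt (pd w i) (fderiv ℝ (pd w i) x) x := (hud i x).hasFDerivAt
        have hQ : HasFDerivAt q (fderiv ℝ q x) x := (hqd x).hasFDerivAt
        have hq' := hpdq x hxU hxΩ i
        rw [pd_of_hasFDerivAt (f := fun y => w y * pd w i y * (q y * q y)) ((hWf.mul hW).mul (hQ.mul hQ)) i]
        simp only [ContinuousLinearMap.add_apply, ContinuousLinearMap.coe_smul',
          Pi.smul_apply, smul_eq_mul, Pi.mul_apply]
        simp only [pd] at hq' ⊢
        rw [hq']
        ring
      · rw [pd_zero_off hK.isClosed hg0 hx i]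
        simp [hw0 x hx, hu0 i x hx]
    simp only [hexp] at h0
    have intB12 : Integrable (fun x => pd w i x ^ 2 * q x ^ 2
        + w x * pd (pd w i) i x * q x ^ 2) := (intB1 i).add (intB2 i)
    rw [integral_sub intB12 (intB3 i), integral_add (intB1 i) (intB2 i)] at h0
    linarith
  -- identity family C
  have hRC : ∀ i : Fin n,
      3 * ∫ x, w x ^ 2 * pd ρ i x ^ 2 * q x ^ 4 =
        (∫ x, 2 * w x * pd w i x * pd ρ i x * q x ^ 3) +
        ∫ x, w x ^ 2 * pd (pd ρ i) i x * q x ^ 3 := by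
    intro i
    have hg1 : ContDiffOn ℝ 1 (fun y => w y * w y * pd ρ i y * (q y * q y * q y)) Ω :=
      ((hw1.mul hw1).mul (hP1 i)).mul ((hq1Ω.mul hq1Ω).mul hq1Ω)
    have hg0 : ∀ x ∉ K, (fun y => w y * w y * pd ρ i y * (q y * q y * q y)) x = 0 := by
      intro x hx; simp [hw0 x hx]
    have h0 := integral_pd_zero hΩo hK hg1 hg0 hKΩ i
    have hexp : ∀ x, pd (fun y => w y * w y * pd ρ i y * (q y * q y * q y)) i x =
        2 * w x * pd w i x * pd ρ i x * q x ^ 3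
        + w x ^ 2 * pd (pd ρ i) i x * q x ^ 3
        - 3 * (w x ^ 2 * pd ρ i x ^ 2 * q x ^ 4) := by
      intro x
      by_cases hx : x ∈ K
      · have hxU : x ∈ U := hKU hx
        have hxΩ : x ∈ Ω := hKΩ hx
        have hWf : HasFDerivAt w (fderiv ℝ w x) x := (hwd x).hasFDerivAt
        have hP : HasFDerivAt (pd ρ i) (fderiv ℝ (pd ρ i) x) x := (hPd i x hxΩ).hasFDerivAt
        have hQ : HasFDerivAt q (fderiv ℝ q x) x := (hqd x).hasFDerivAt
        have hq' := hpdq x hxU hxΩ i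
        rw [pd_of_hasFDerivAt (f := fun y => w y * w y * pd ρ i y * (q y * q y * q y)) (((hWf.mul hWf).mul hP).mul ((hQ.mul hQ).mul hQ)) i]
        simp only [ContinuousLinearMap.add_apply, ContinuousLinearMap.coe_smul',
          Pi.smul_apply, smul_eq_mul, Pi.mul_apply]
        simp only [pd] at hq' ⊢
        rw [hq']
        ring
      · rw [pd_zero_off hK.isClosed hg0 hx i]
        simp [hw0 x hx]
    simp only [hexp] at h0
    have intBC : Integrable (fun x => 2 * w x * pd w i x * pd ρ i x * q x ^ 3
        + w x ^ 2 * pd (pd ρ i) i x * q x ^ 3) := (intB3 i).add (intC2 i)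
    have intC3' : Integrable (fun x => 3 * (w x ^ 2 * pd ρ i x ^ 2 * q x ^ 4)) :=
      (intC3 i).const_mul 3
    rw [integral_sub intBC intC3', integral_add (intB3 i) (intC2 i),
      integral_const_mul] at h0
    linarith
  -- identity family D and symmetry
  have hTD : ∀ i j : Fin n,
      ∫ x, pd (pd w i) j x ^ 2 = ∫ x, pd (pd w i) i x * pd (pd w j) j x := by
    intro i j
    have hgd0 : ∀ x ∉ K, (fun y => pd w j y * pd (pd w i) j y) x = 0 := by
      intro x hx; simp [hu0 j x hx]
    have hge0 : ∀ x ∉ K, (fun y => pd w j y * pd (pd w i) i y) x = 0 := by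
      intro x hx; simp [hu0 j x hx]
    have h0d := integral_pd_zero hΩo hK ((hu1 j).mul (huu1 i j)) hgd0 hKΩ i
    have h0e := integral_pd_zero hΩo hK ((hu1 j).mul (huu1 i i)) hge0 hKΩ j
    have hexpd : ∀ x, pd (fun y => pd w j y * pd (pd w i) j y) i x =
        pd (pd w i) j x ^ 2 + pd w j x * pd (pd (pd w i) i) j x := by
      intro x
      have hUj : HasFDerivAt (pd w j) (fderiv ℝ (pd w j) x) x := (hud j x).hasFDerivAt
      have hUij : HasFDerivAt (pd (pd w i) j) (fderiv ℝ (pd (pd w i) j) x) x :=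
        (huud i j x).hasFDerivAt
      have e1 := pd_comm hw j i x
      have e2 := pd_comm (hu i) j i x
      rw [pd_of_hasFDerivAt (f := fun y => pd w j y * pd (pd w i) j y) (hUj.mul hUij) i]
      simp only [ContinuousLinearMap.add_apply, ContinuousLinearMap.coe_smul',
        Pi.smul_apply, smul_eq_mul]
      simp only [pd] at e1 e2 ⊢
      rw [e1, e2]
      ring
    have hexpe : ∀ x, pd (fun y => pd w j y * pd (pd w i) i y) j x =
        pd (pd w i) i x * pd (pd w j) j x + pd w j x * pd (pd (pd w i) i) j x := by
      intro x
      have hUj : HasFDerivAt (pd w j) (fderiv ℝ (pd w j) x) x := (hud j x).hasFDerivAt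
      have hUii : HasFDerivAt (pd (pd w i) i) (fderiv ℝ (pd (pd w i) i) x) x :=
        (huud i i x).hasFDerivAt
      rw [pd_of_hasFDerivAt (f := fun y => pd w j y * pd (pd w i) i y) (hUj.mul hUii) j]
      simp only [ContinuousLinearMap.add_apply, ContinuousLinearMap.coe_smul',
        Pi.smul_apply, smul_eq_mul]
      simp only [pd]
      ring
    simp only [hexpd] at h0d
    simp only [hexpe] at h0e
    rw [integral_add (intD1 i j) (intD4 i j)] at h0d
    rw [integral_add (intD3 i j) (intD4 i j)] at h0e
    linarith
  -- inequality: sum over j of the A2 terms is nonpositive (superharmonicity)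
  have hIA : ∀ i : Fin n, (∑ j, ∫ x, pd w i x ^ 2 * pd (pd ρ j) j x * q x) ≤ 0 := by
    intro i
    rw [← integral_finset_sum _ (fun j _ => intA2 i j)]
    apply integral_nonpos
    intro x
    simp only [Pi.zero_apply]
    by_cases hx : x ∈ K
    · have hxΩ : x ∈ Ω := hKΩ hx
      have hsum : ∑ j, pd w i x ^ 2 * pd (pd ρ j) j x * q x
          = (pd w i x ^ 2 * q x) * lap ρ x := by
        rw [lap, Finset.mul_sum]
        exact Finset.sum_congr rfl fun j _ => by ring
      rw [hsum]
      have h1 : 0 ≤ pd w i x ^ 2 * q x := mul_nonneg (sq_nonneg _) (hqnn x)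
      nlinarith [hρlap x hxΩ]
    · simp [hu0 i x hx]
  have hLC : (∑ i, ∫ x, w x ^ 2 * pd (pd ρ i) i x * q x ^ 3) ≤ 0 := by
    rw [← integral_finset_sum _ (fun i _ => intC2 i)]
    apply integral_nonpos
    intro x
    simp only [Pi.zero_apply]
    by_cases hx : x ∈ K
    · have hxΩ : x ∈ Ω := hKΩ hx
      have hsum : ∑ i, w x ^ 2 * pd (pd ρ i) i x * q x ^ 3
          = (w x ^ 2 * q x ^ 3) * lap ρ x := by
        rw [lap, Finset.mul_sum]
        exact Finset.sum_congr rfl fun i _ => by ring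
      rw [hsum]
      have h1 : 0 ≤ w x ^ 2 * q x ^ 3 :=
        mul_nonneg (sq_nonneg _) (pow_nonneg (hqnn x) 3)
      nlinarith [hρlap x hxΩ]
    · simp [hw0 x hx]
  -- AM-GM bound on A1 terms
  have hIAm : ∀ i j : Fin n, (∫ x, 2 * pd w i x * pd (pd w i) j x * pd ρ j x * q x) ≤
      (1/2) * (∫ x, pd w i x ^ 2 * pd ρ j x ^ 2 * q x ^ 2) +
      2 * ∫ x, pd (pd w i) j x ^ 2 := by
    intro i j
    have hmaj : Integrable (fun x => (1/2) * (pd w i x ^ 2 * pd ρ j x ^ 2 * q x ^ 2)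
        + 2 * (pd (pd w i) j x ^ 2)) := ((intA3 i j).const_mul _).add ((intD1 i j).const_mul _)
    have hmono := integral_mono (intA1 i j) hmaj (fun x => by
      nlinarith [sq_nonneg (pd w i x * pd ρ j x * q x - 2 * pd (pd w i) j x)])
    rw [integral_add ((intA3 i j).const_mul _) ((intD1 i j).const_mul _),
      integral_const_mul, integral_const_mul] at hmono
    exact hmono
  -- first-order Hardy, per direction
  have hSA : ∀ i : Fin n, (∑ j, ∫ x, pd w i x ^ 2 * pd ρ j x ^ 2 * q x ^ 2) ≤
      4 * ∑ j, ∫ x, pd (pd w i) j x ^ 2 := by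
    intro i
    have h1 : (∑ j, ∫ x, pd w i x ^ 2 * pd ρ j x ^ 2 * q x ^ 2) =
        (∑ j, ∫ x, 2 * pd w i x * pd (pd w i) j x * pd ρ j x * q x) +
        ∑ j, ∫ x, pd w i x ^ 2 * pd (pd ρ j) j x * q x := by
      rw [← Finset.sum_add_distrib]
      exact Finset.sum_congr rfl fun j _ => hRA i j
    have h2 : (∑ j, ∫ x, 2 * pd w i x * pd (pd w i) j x * pd ρ j x * q x) ≤
        ∑ j, ((1/2) * (∫ x, pd w i x ^ 2 * pd ρ j x ^ 2 * q x ^ 2) +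
          2 * ∫ x, pd (pd w i) j x ^ 2) :=
      Finset.sum_le_sum fun j _ => hIAm i j
    rw [Finset.sum_add_distrib, ← Finset.mul_sum, ← Finset.mul_sum] at h2
    have h3 := hIA i
    linarith
  -- pointwise gradient lower bound facts
  have hgrad2 : ∀ x ∈ Ω, c ^ 2 ≤ gradSq ρ x := by
    intro x hxΩ
    have hgs : (0:ℝ) ≤ gradSq ρ x := by
      simp only [gradSq]
      positivity
    nlinarith [hρgrad x hxΩ, Real.sq_sqrt hgs, Real.sqrt_nonneg (gradSq ρ x)]
  have hB : ∀ i : Fin n, c ^ 2 * (∫ x, pd w i x ^ 2 * q x ^ 2) ≤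
      ∑ j, ∫ x, pd w i x ^ 2 * pd ρ j x ^ 2 * q x ^ 2 := by
    intro i
    calc c ^ 2 * (∫ x, pd w i x ^ 2 * q x ^ 2)
        = ∫ x, c ^ 2 * (pd w i x ^ 2 * q x ^ 2) := (integral_const_mul _ _).symm
      _ ≤ ∫ x, ∑ j, pd w i x ^ 2 * pd ρ j x ^ 2 * q x ^ 2 := by
          apply integral_mono ((intB1 i).const_mul _)
            (integrable_finset_sum _ fun j _ => intA3 i j)
          intro x
          by_cases hx : x ∈ K
          · have hxΩ : x ∈ Ω := hKΩ hx
            calc c ^ 2 * (pd w i x ^ 2 * q x ^ 2)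
                ≤ gradSq ρ x * (pd w i x ^ 2 * q x ^ 2) :=
                  mul_le_mul_of_nonneg_right (hgrad2 x hxΩ) (by positivity)
              _ = ∑ j, pd w i x ^ 2 * pd ρ j x ^ 2 * q x ^ 2 := by
                  rw [gradSq, Finset.sum_mul]
                  exact Finset.sum_congr rfl fun j _ => by ring
          · simp [hu0 i x hx]
      _ = ∑ j, ∫ x, pd w i x ^ 2 * pd ρ j x ^ 2 * q x ^ 2 :=
          integral_finset_sum _ fun j _ => intA3 i j
  have hC : c ^ 2 * (∫ x, w x ^ 2 * q x ^ 4) ≤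
      ∑ i, ∫ x, w x ^ 2 * pd ρ i x ^ 2 * q x ^ 4 := by
    calc c ^ 2 * (∫ x, w x ^ 2 * q x ^ 4)
        = ∫ x, c ^ 2 * (w x ^ 2 * q x ^ 4) := (integral_const_mul _ _).symm
      _ ≤ ∫ x, ∑ i, w x ^ 2 * pd ρ i x ^ 2 * q x ^ 4 := by
          apply integral_mono (intA.const_mul _)
            (integrable_finset_sum _ fun i _ => intC3 i)
          intro x
          by_cases hx : x ∈ K
          · have hxΩ : x ∈ Ω := hKΩ hx
            calc c ^ 2 * (w x ^ 2 * q x ^ 4)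
                ≤ gradSq ρ x * (w x ^ 2 * q x ^ 4) :=
                  mul_le_mul_of_nonneg_right (hgrad2 x hxΩ) (by positivity)
              _ = ∑ i, w x ^ 2 * pd ρ i x ^ 2 * q x ^ 4 := by
                  rw [gradSq, Finset.sum_mul]
                  exact Finset.sum_congr rfl fun i _ => by ring
          · simp [hw0 x hx]
      _ = ∑ i, ∫ x, w x ^ 2 * pd ρ i x ^ 2 * q x ^ 4 :=
          integral_finset_sum _ fun i _ => intC3 i
  -- the w·Δw term
  have hW2 : (∑ i, ∫ x, w x * pd (pd w i) i x * q x ^ 2) ≤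
      (3 * c ^ 2 / 2) * (∫ x, w x ^ 2 * q x ^ 4) +
      (1 / (6 * c ^ 2)) * ∫ x, (lap w x) ^ 2 := by
    rw [← integral_finset_sum _ (fun i _ => intB2 i)]
    have hmaj : Integrable (fun x => (3 * c ^ 2 / 2) * (w x ^ 2 * q x ^ 4)
        + (1 / (6 * c ^ 2)) * ((lap w x) ^ 2)) := (intA.const_mul _).add (intD.const_mul _)
    have hmono := integral_mono (integrable_finset_sum _ fun i _ => intB2 i) hmaj (fun x => by
      have hsum : ∑ i, w x * pd (pd w i) i x * q x ^ 2
          = (w x * q x ^ 2) * lap w x := by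
        rw [lap, Finset.mul_sum]
        exact Finset.sum_congr rfl fun i _ => by ring
      rw [hsum]
      have key : (3 * c ^ 2 / 2) * (w x ^ 2 * q x ^ 4)
          + (1 / (6 * c ^ 2)) * ((lap w x) ^ 2) - (w x * q x ^ 2) * lap w x
          = (3 * c ^ 2 * (w x * q x ^ 2) - lap w x) ^ 2 / (6 * c ^ 2) := by
        field_simp
        ring
      nlinarith [div_nonneg (sq_nonneg (3 * c ^ 2 * (w x * q x ^ 2) - lap w x))
        (by positivity : (0:ℝ) ≤ 6 * c ^ 2), key])
    rw [integral_add (intA.const_mul _) (intD.const_mul _),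
      integral_const_mul, integral_const_mul] at hmono
    exact hmono
  -- the Hessian identity: ∑ t = D
  have hD : (∑ i : Fin n, ∑ j : Fin n, ∫ x, pd (pd w i) i x * pd (pd w j) j x) =
      ∫ x, (lap w x) ^ 2 := by
    have h1 : ∀ i : Fin n, (∑ j : Fin n, ∫ x, pd (pd w i) i x * pd (pd w j) j x) =
        ∫ x, ∑ j, pd (pd w i) i x * pd (pd w j) j x :=
      fun i => (integral_finset_sum _ fun j _ => intD3 i j).symm
    simp only [h1]
    rw [← integral_finset_sum _ (fun i _ =>
      integrable_finset_sum _ fun j _ => intD3 i j)]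
    congr 1
    funext x
    rw [pow_two, lap, Finset.sum_mul_sum]
  -- nonnegativity
  have hAnn : 0 ≤ ∫ x, w x ^ 2 * q x ^ 4 :=
    integral_nonneg fun x => by positivity
  have hDnn : 0 ≤ ∫ x, (lap w x) ^ 2 := integral_nonneg fun x => sq_nonneg _
  -- convert the set integrals
  have hLHS : ∫ x in Ω, w x ^ 2 / ρ x ^ 4 = ∫ x, w x ^ 2 * q x ^ 4 := by
    rw [setIntegral_congr_fun hΩo.measurableSet
      (g := fun x => w x ^ 2 * q x ^ 4) ?_]
    · exact setIntegral_eq_integral_of_forall_compl_eq_zero fun x hx => by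
        simp [hw0 x (fun h => hx (hKΩ h))]
    · intro x hx
      by_cases hxK : x ∈ K
      · have hqx : q x = (ρ x)⁻¹ := hqU x (hKU hxK)
        simp only [hqx]
        rw [div_eq_mul_inv, ← inv_pow]
      · simp [hw0 x hxK]
  have hRHS : ∫ x in Ω, (lap w x) ^ 2 = ∫ x, (lap w x) ^ 2 :=
    setIntegral_eq_integral_of_forall_compl_eq_zero fun x hx => by
      simp [hlapw0 x (fun h => hx (hKΩ h))]
  rw [hLHS, hRHS]
  -- final assembly
  set IA := ∫ x, w x ^ 2 * q x ^ 4 with hIAdef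
  set ID := ∫ x, (lap w x) ^ 2 with hIDdef
  have hBtot : c ^ 2 * (∑ i, ∫ x, pd w i x ^ 2 * q x ^ 2) ≤ 4 * ID := by
    have h1 : c ^ 2 * (∑ i, ∫ x, pd w i x ^ 2 * q x ^ 2)
        ≤ ∑ i, ∑ j, ∫ x, pd w i x ^ 2 * pd ρ j x ^ 2 * q x ^ 2 := by
      rw [Finset.mul_sum]
      exact Finset.sum_le_sum fun i _ => hB i
    have h2 : (∑ i : Fin n, ∑ j, ∫ x, pd w i x ^ 2 * pd ρ j x ^ 2 * q x ^ 2)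
        ≤ ∑ i : Fin n, 4 * ∑ j, ∫ x, pd (pd w i) j x ^ 2 :=
      Finset.sum_le_sum fun i _ => hSA i
    have h3 : (∑ i : Fin n, 4 * ∑ j, ∫ x, pd (pd w i) j x ^ 2)
        = 4 * ∑ i : Fin n, ∑ j, ∫ x, pd (pd w i) i x * pd (pd w j) j x := by
      rw [Finset.mul_sum]
      exact Finset.sum_congr rfl fun i _ => by
        rw [Finset.mul_sum, Finset.mul_sum]
        exact Finset.sum_congr rfl fun j _ => by rw [hTD i j]
    rw [h3, hD] at h2
    linarith
  have hmain : 3 * (c ^ 2 * IA) ≤ (∑ i, ∫ x, pd w i x ^ 2 * q x ^ 2) +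
      (3 * c ^ 2 / 2) * IA + (1 / (6 * c ^ 2)) * ID := by
    have h1 : 3 * (c ^ 2 * IA) ≤ 3 * ∑ i, ∫ x, w x ^ 2 * pd ρ i x ^ 2 * q x ^ 4 := by
      linarith [hC]
    have h2 : (3 : ℝ) * ∑ i, ∫ x, w x ^ 2 * pd ρ i x ^ 2 * q x ^ 4
        = (∑ i, ∫ x, 2 * w x * pd w i x * pd ρ i x * q x ^ 3) +
          ∑ i, ∫ x, w x ^ 2 * pd (pd ρ i) i x * q x ^ 3 := by
      rw [Finset.mul_sum, ← Finset.sum_add_distrib]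
      exact Finset.sum_congr rfl fun i _ => hRC i
    have h3 : (∑ i, ∫ x, 2 * w x * pd w i x * pd ρ i x * q x ^ 3)
        = (∑ i, ∫ x, pd w i x ^ 2 * q x ^ 2) +
          ∑ i, ∫ x, w x * pd (pd w i) i x * q x ^ 2 := by
      rw [← Finset.sum_add_distrib]
      exact Finset.sum_congr rfl fun i _ => hRB i
    linarith [hLC, hW2]
  -- finish with algebra
  have hc2 : (0:ℝ) < c ^ 2 := by positivity
  have hkey : (3 / 2) * c ^ 2 * IA ≤ (∑ i, ∫ x, pd w i x ^ 2 * q x ^ 2)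
      + (1 / (6 * c ^ 2)) * ID := by linarith
  have hkey2 : c ^ 2 * ((3 / 2) * c ^ 2 * IA) ≤
      c ^ 2 * ((∑ i, ∫ x, pd w i x ^ 2 * q x ^ 2) + (1 / (6 * c ^ 2)) * ID) :=
    mul_le_mul_of_nonneg_left hkey (le_of_lt hc2)
  have hcc : c ≠ 0 := ne_of_gt hc
  have hkey3 : (3 / 2) * c ^ 4 * IA ≤
      c ^ 2 * (∑ i, ∫ x, pd w i x ^ 2 * q x ^ 2) + (1 / 6) * ID := by
    have : c ^ 2 * ((1 / (6 * c ^ 2)) * ID) = (1 / 6) * ID := by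
      field_simp
    nlinarith [hkey2]
  have hfin : (3 / 2) * c ^ 4 * IA ≤ 4 * ID + (1 / 6) * ID := by linarith
  rw [div_mul_eq_mul_div, le_div_iff₀ (by positivity : (0:ℝ) < 9 * c ^ 4)]
  nlinarith [hfin]

end HardyAux

/-- second-order Hardy inequality: for a bounded domain `Ω ⊆ ℝⁿ` and
`c > 0` there is `C = C(Ω, c) > 0` such that for every positive `C²` function `ρ`
with `Δρ ≤ 0` and `|∇ρ| ≥ c` on `Ω`, and every `w ∈ C_c^∞(Ω)`,
`∫_Ω w²/ρ⁴ ≤ C ∫_Ω |Δw|²`. -/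
theorem stmt2 {n : ℕ} (Ω : Set (E n)) (hΩo : IsOpen Ω) (hΩne : Ω.Nonempty)
    (hΩb : Bornology.IsBounded Ω) (c : ℝ) (hc : 0 < c) :
    ∃ C > 0, ∀ ρ : E n → ℝ, ContDiffOn ℝ 2 ρ Ω → (∀ x ∈ Ω, 0 < ρ x) →
      (∀ x ∈ Ω, lap ρ x ≤ 0) → (∀ x ∈ Ω, c ≤ Real.sqrt (gradSq ρ x)) →
      ∀ w : E n → ℝ, ContDiff ℝ (⊤ : ℕ∞) w → HasCompactSupport w → tsupport w ⊆ Ω →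
        ∫ x in Ω, (w x) ^ 2 / (ρ x) ^ 4 ≤ C * ∫ x in Ω, (lap w x) ^ 2 := by
  refine ⟨25 / (9 * c ^ 4), by positivity, ?_⟩
  intro ρ hρ hρpos hρlap hρgrad w hw hwc hwΩ
  exact HardyAux.core hΩo hc ρ hρ hρpos hρlap hρgrad w hw hwc hwΩ
end
end
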